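/- Let k ≥ 1 be an integer and H ≥ 2 a real number. Then there exists a finite decreasing sequence H = b_0 > b_1 > ... > b_K with K ≤ k·H^{1/k}, satisfying b_{i+1} = b_i - b_i^{(k-1)/k} for all i < K, b_{K-1} ≥ 2, and b_K < 2. In particular the intervals [b_{i+1}, b_i] cover [2, H]. -/
import Mathlib

private lemma pow_step_aux (k : ℕ) (hk : 1 ≤ k) (y : ℝ) (hy : 1 ≤ y) :
    y ^ k - y ^ (k - 1) ≤ (y - 1 / k) ^ k := by
  have hy0 : 0 < y := lt_of_lt_of_le one_pos hy
  have hk0 : (0 : ℝ) < k := by exact_mod_cast hk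
  have hk1 : (1 : ℝ) ≤ (k : ℝ) := by exact_mod_cast hk
  have hky : (1 : ℝ) ≤ (k : ℝ) * y := by nlinarith
  have ha : (-2 : ℝ) ≤ -(1 / ((k : ℝ) * y)) := by
    have h1 : 1 / ((k : ℝ) * y) ≤ 1 := by
      rw [div_le_one (by nlinarith)]; exact hky
    linarith
  have hbern := one_add_mul_le_pow ha k
  have hc : 1 + (k : ℝ) * (-(1 / ((k : ℝ) * y))) = 1 - 1 / y := by
    field_simp
    ring
  rw [hc] at hbern
  have h1 : y * (1 + -(1 / ((k : ℝ) * y))) = y - 1 / k := by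
    field_simp
    ring
  have h2 : y ^ k * (1 - 1 / y) = y ^ k - y ^ (k - 1) := by
    have hyk : y ^ k = y ^ (k - 1) * y := by
      rw [← pow_succ, Nat.sub_add_cancel hk]
    rw [mul_sub, mul_one, mul_one_div, hyk, mul_div_assoc,
      div_self hy0.ne', mul_one]
  calc y ^ k - y ^ (k - 1) = y ^ k * (1 - 1 / y) := h2.symm
    _ ≤ y ^ k * (1 + -(1 / ((k : ℝ) * y))) ^ k :=
        mul_le_mul_of_nonneg_left hbern (by positivity)
    _ = (y - 1 / k) ^ k := by rw [← mul_pow, h1]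

private lemma rpow_step_aux (k : ℕ) (hk : 1 ≤ k) (x : ℝ) (hx : 1 ≤ x) :
    (x - x ^ (((k : ℝ) - 1) / k)) ^ ((1 : ℝ) / k) ≤ x ^ ((1 : ℝ) / k) - 1 / k := by
  have hx0 : (0 : ℝ) < x := lt_of_lt_of_le one_pos hx
  have hk0 : (0 : ℝ) < k := by exact_mod_cast hk
  set y := x ^ ((1 : ℝ) / k) with hy
  have hy1 : 1 ≤ y := Real.one_le_rpow hx (by positivity)
  have hyk : y ^ k = x := by
    rw [hy, ← Real.rpow_natCast (x ^ ((1:ℝ)/k)) k, ← Real.rpow_mul hx0.le,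
      one_div, inv_mul_cancel₀ hk0.ne', Real.rpow_one]
  have hyk1 : y ^ (k - 1) = x ^ (((k : ℝ) - 1) / k) := by
    rw [hy, ← Real.rpow_natCast (x ^ ((1:ℝ)/k)) (k - 1), ← Real.rpow_mul hx0.le]
    congr 1
    rw [Nat.cast_sub hk, Nat.cast_one]
    field_simp
  have hbase : 0 ≤ x - x ^ (((k : ℝ) - 1) / k) := by
    have h1 : x ^ (((k : ℝ) - 1) / k) ≤ x ^ (1 : ℝ) := by
      apply Real.rpow_le_rpow_of_exponent_le hx
      rw [div_le_one hk0]; linarith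
    rw [Real.rpow_one] at h1; linarith
  have hstep : x - x ^ (((k : ℝ) - 1) / k) ≤ (y - 1 / k) ^ k := by
    have h := pow_step_aux k hk y hy1
    rw [hyk, hyk1] at h
    exact h
  have hyk2 : 0 ≤ y - 1 / k := by
    have : 1 / (k : ℝ) ≤ 1 := by rw [div_le_one hk0]; exact_mod_cast hk
    linarith
  calc (x - x ^ (((k : ℝ) - 1) / k)) ^ ((1 : ℝ) / k)
      ≤ ((y - 1 / k) ^ k) ^ ((1 : ℝ) / k) :=
        Real.rpow_le_rpow hbase hstep (by positivity)
    _ = y - 1 / k := by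
        have hyk2' : 0 ≤ y - ((k : ℝ))⁻¹ := by rwa [one_div] at hyk2
        rw [one_div]
        exact Real.pow_rpow_inv_natCast hyk2' (by omega)

/-- The determinant-interval subdivision: `[2, H]` is covered by at most `k·H^{1/k}`
intervals `[b_{i+1}, b_i]` with `b_0 = H`, `b_{i+1} = b_i - b_i^{(k-1)/k}`,
`b_{K-1} ≥ 2` and `b_K < 2`. -/
theorem stmt_1 (k : ℕ) (hk : 1 ≤ k) (H : ℝ) (hH : 2 ≤ H) :
    ∃ (K : ℕ) (b : ℕ → ℝ), 1 ≤ K ∧ (K : ℝ) ≤ (k : ℝ) * H ^ ((1 : ℝ) / k) ∧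
      b 0 = H ∧
      (∀ i < K, b (i + 1) = b i - b i ^ (((k : ℝ) - 1) / k)) ∧
      (∀ i < K, b (i + 1) < b i) ∧
      2 ≤ b (K - 1) ∧ b K < 2 ∧
      Set.Icc (2 : ℝ) H ⊆ ⋃ i ∈ Finset.range K, Set.Icc (b (i + 1)) (b i) := by
  have hk0 : (0 : ℝ) < k := by exact_mod_cast hk
  set e : ℝ := ((k : ℝ) - 1) / k with he
  have he0 : 0 ≤ e := by
    apply div_nonneg _ hk0.le
    have : (1 : ℝ) ≤ (k : ℝ) := by exact_mod_cast hk
    linarith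
  obtain ⟨b, hb0, hbS⟩ : ∃ b : ℕ → ℝ, b 0 = H ∧ ∀ n, b (n + 1) = b n - b n ^ e :=
    ⟨fun n => Nat.rec H (fun _ x => x - x ^ e) n, rfl, fun n => rfl⟩
  -- decrease by at least 1 while ≥ 2
  have hdec : ∀ n, 2 ≤ b n → b (n + 1) ≤ b n - 1 := by
    intro n hn
    have h1 : 1 ≤ b n ^ e := Real.one_le_rpow (by linarith) he0
    rw [hbS]; linarith
  -- termination
  have hterm : ∃ n, b n < 2 := by
    by_contra h
    push_neg at h
    have hall : ∀ n : ℕ, b n ≤ H - n := by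
      intro n
      induction n with
      | zero => simp [hb0]
      | succ m ih =>
        have := hdec m (h m)
        push_cast
        linarith
    obtain ⟨n, hn⟩ := exists_nat_gt H
    have h1 := hall n
    have h2 := h n
    linarith
  set K := Nat.find hterm with hKdef
  have hK2 : b K < 2 := Nat.find_spec hterm
  have hKge : ∀ i < K, 2 ≤ b i := fun i hi => le_of_not_gt (Nat.find_min hterm hi)
  have hK1 : 1 ≤ K := by
    by_contra h
    have hK0 : K = 0 := by omega
    rw [hK0, hb0] at hK2
    linarith
  -- rpow bound by induction
  have hbound : ∀ i, i < K → b i ^ ((1 : ℝ) / k) ≤ H ^ ((1 : ℝ) / k) - i / k := by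
    intro i
    induction i with
    | zero => intro _; simp [hb0]
    | succ m ih =>
      intro h
      have hm : m < K := Nat.lt_of_succ_lt h
      have h1 := ih hm
      have h2 : 2 ≤ b m := hKge m hm
      have h3 : (b m - b m ^ e) ^ ((1 : ℝ) / k) ≤ b m ^ ((1 : ℝ) / k) - 1 / k :=
        rpow_step_aux k hk (b m) (by linarith)
      rw [hbS]
      push_cast
      rw [add_div]
      linarith
  have hKm1 : K - 1 < K := by omega
  have hb1 : 2 ≤ b (K - 1) := hKge _ hKm1
  have hKbound : (K : ℝ) ≤ (k : ℝ) * H ^ ((1 : ℝ) / k) := by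
    have h1 := hbound (K - 1) hKm1
    have h2 : (1 : ℝ) ≤ b (K - 1) ^ ((1 : ℝ) / k) :=
      Real.one_le_rpow (by linarith) (by positivity)
    have hcast : ((K - 1 : ℕ) : ℝ) = (K : ℝ) - 1 := by
      rw [Nat.cast_sub hK1, Nat.cast_one]
    rw [hcast] at h1
    have h3 : ((K : ℝ) - 1) / k ≤ H ^ ((1 : ℝ) / k) - 1 := by linarith
    have h4 : (K : ℝ) - 1 ≤ (k : ℝ) * (H ^ ((1 : ℝ) / k) - 1) := by
      rw [div_le_iff₀ hk0] at h3
      linarith [mul_comm ((K:ℝ) - 1) (k:ℝ)]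
    have hk1 : (1 : ℝ) ≤ (k : ℝ) := by exact_mod_cast hk
    nlinarith
  refine ⟨K, b, hK1, hKbound, hb0, fun i _ => hbS i, ?_, hb1, hK2, ?_⟩
  · intro i hi
    have h2 : 2 ≤ b i := hKge i hi
    have h3 : 0 < b i ^ e := Real.rpow_pos_of_pos (by linarith) e
    rw [hbS]; linarith
  · intro x hx
    obtain ⟨hx2, hxH⟩ := hx
    have hex : ∃ i, b (i + 1) ≤ x := by
      refine ⟨K - 1, ?_⟩
      rw [Nat.sub_add_cancel hK1]
      linarith
    set i := Nat.find hex with hidef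
    have hi1 : b (i + 1) ≤ x := Nat.find_spec hex
    have hiK : i < K := by
      have : i ≤ K - 1 := Nat.find_min' hex (by rw [Nat.sub_add_cancel hK1]; linarith)
      omega
    have hbi : x ≤ b i := by
      rcases Nat.eq_zero_or_pos i with h0 | hpos
      · rw [h0, hb0]; exact hxH
      · have h := Nat.find_min hex (Nat.sub_lt hpos one_pos)
        push_neg at h
        rw [← hidef] at h
        have heq : i - 1 + 1 = i := by omega
        rw [heq] at h
        exact h.le
    simp only [Set.mem_iUnion, Finset.mem_range]
    exact ⟨i, hiK, hi1, hbi⟩
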